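/- Let X be a partially ordered set with an involution λ (a map with λ² = id and x ≤ y ⟺ λ(y) ≤ λ(x)). Then there exist disjoint subsets X₁, X₂, X₃ with X = X₁ ∪ X₂ ∪ X₃ such that: (i) X₃ is the fixed-point set of λ; (ii) x ∈ X₁ implies λ(x) ∈ X₂ and x ∈ X₂ implies λ(x) ∈ X₁; (iii) if x ∈ X₁ and y ≤ x then y ∈ X₁, and if x ∈ X₂ and x ≤ y then y ∈ X₂. -/
import Mathlib


/-- A poset X with an involution λ admits a λ-decomposition
(X₁, X₂, X₃): disjoint subsets covering X with X₃ the fixed-point set of λ,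
λ swapping X₁ and X₂, X₁ downward closed and X₂ upward closed. -/
theorem exists_lambda_decomposition {X : Type*} [PartialOrder X]
    (l : X → X) (hl2 : ∀ x, l (l x) = x)
    (hord : ∀ x y : X, x ≤ y ↔ l y ≤ l x) :
    ∃ X₁ X₂ X₃ : Set X,
      (∀ x : X, x ∈ X₁ ∨ x ∈ X₂ ∨ x ∈ X₃) ∧
      X₁ ∩ X₂ = ∅ ∧ X₁ ∩ X₃ = ∅ ∧ X₂ ∩ X₃ = ∅ ∧
      X₃ = {x : X | l x = x} ∧
      (∀ x ∈ X₁, l x ∈ X₂) ∧ (∀ x ∈ X₂, l x ∈ X₁) ∧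
      (∀ x ∈ X₁, ∀ y : X, y ≤ x → y ∈ X₁) ∧
      (∀ x ∈ X₂, ∀ y : X, x ≤ y → y ∈ X₂) := by
  have hinj : ∀ a b, l a = l b → a = b := fun a b h => by
    rw [← hl2 a, h, hl2]
  -- Zorn's lemma on lower sets disjoint from their image under l
  obtain ⟨S, hSmem, hSmax⟩ := zorn_subset
      {S : Set X | IsLowerSet S ∧ ∀ a ∈ S, l a ∉ S} (by
    intro c hc hchain
    refine ⟨⋃₀ c, ⟨?_, ?_⟩, fun s hs => Set.subset_sUnion_of_mem hs⟩
    · intro a b hba ⟨s, hs, has⟩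
      exact ⟨s, hs, (hc hs).1 hba has⟩
    · rintro a ⟨s, hs, has⟩ ⟨t, ht, hat⟩
      rcases hchain.total hs ht with h | h
      · exact (hc ht).2 a (h has) hat
      · exact (hc hs).2 a has (h hat))
  obtain ⟨hlow, hdisj⟩ := hSmem
  have key : ∀ x, x ∉ S → x ∉ l '' S → ¬ l x ≤ x → False := by
    intro x hx1 hx2 hx3
    have hT : (S ∪ {y | y ≤ x}) ∈ {S : Set X | IsLowerSet S ∧ ∀ a ∈ S, l a ∉ S} := by
      constructor
      · intro a b hba hab
        rcases hab with h | h
        · exact Or.inl (hlow hba h)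
        · exact Or.inr (le_trans hba h)
      · rintro a (ha | ha) (hla | hla)
        · exact hdisj a ha hla
        · -- a ∈ S, l a ≤ x, so l x ≤ a, so l x ∈ S, so x ∈ l '' S
          have : l x ≤ a := by
            have := (hord (l a) x).mp hla
            rwa [hl2] at this
          exact hx2 ⟨l x, hlow this ha, hl2 x⟩
        · -- a ≤ x, l a ∈ S : l x ≤ l a, so l x ∈ S
          have : l x ≤ l a := (hord a x).mp ha
          exact hx2 ⟨l x, hlow this hla, hl2 x⟩
        · -- a ≤ x, l a ≤ x : l x ≤ a ≤ x contradiction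
          have h1 : l x ≤ a := by
            have := (hord (l a) x).mp hla
            rwa [hl2] at this
          exact hx3 (le_trans h1 ha)
    have hsub : S ⊆ S ∪ {y | y ≤ x} := Set.subset_union_left
    have : (S ∪ {y | y ≤ x}) ⊆ S := hSmax hT hsub
    exact hx1 (this (Or.inr (le_refl x)))
  refine ⟨S, l '' S, {x : X | l x = x}, ?_, ?_, ?_, ?_, rfl, ?_, ?_, ?_, ?_⟩
  · -- coverage
    intro x
    by_cases h1 : x ∈ S
    · exact Or.inl h1
    by_cases h2 : x ∈ l '' S
    · exact Or.inr (Or.inl h2)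
    refine Or.inr (Or.inr ?_)
    show l x = x
    by_contra hne
    by_cases hc : l x ≤ x
    · -- apply key to l x
      refine key (l x) ?_ ?_ ?_
      · intro h; exact h2 ⟨l x, h, hl2 x⟩
      · rintro ⟨s, hs, hsx⟩
        exact h1 (hinj s x hsx ▸ hs)
      · rw [hl2]
        intro h
        exact hne (le_antisymm hc h)
    · exact key x h1 h2 hc
  · -- S ∩ l '' S = ∅
    ext a
    simp only [Set.mem_inter_iff, Set.mem_empty_iff_false, iff_false, not_and]
    rintro ha ⟨s, hs, hsa⟩
    exact hdisj s hs (hsa ▸ ha)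
  · -- S ∩ fixed = ∅
    ext a
    simp only [Set.mem_inter_iff, Set.mem_empty_iff_false, iff_false, not_and]
    intro ha hfa
    exact hdisj a ha (by rw [hfa]; exact ha)
  · -- l '' S ∩ fixed = ∅
    ext a
    simp only [Set.mem_inter_iff, Set.mem_empty_iff_false, iff_false, not_and]
    rintro ⟨s, hs, hsa⟩ hfa
    have : s = a := hinj s a (by rw [hsa, hfa])
    exact hdisj a (this ▸ hs) (by rw [hfa]; exact this ▸ hs)
  · exact fun x hx => ⟨x, hx, rfl⟩
  · rintro x ⟨s, hs, rfl⟩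
    rw [hl2]; exact hs
  · exact fun x hx y hyx => hlow hyx hx
  · rintro x ⟨s, hs, rfl⟩ y hxy
    have : l y ≤ s := by
      have := (hord (l s) y).mp hxy
      rwa [hl2] at this
    exact ⟨l y, hlow this hs, hl2 y⟩
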